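/- arXiv:2605.07853 — 3 statements merged into one kernel-verified Lean document; each statement's English description precedes it below -/
import Mathlib

section
/- Let Γ be a finite simplicial graph, {G_i} and {G'_i} families of groups, and f_i : G_i → G'_i set maps. Define Φ on words in the syllables recursively by Φ(empty)=empty and Φ(ws) = Φ(w) if f(π(w)) = f(π(ws)), and Φ(ws) = Φ(w)·(f(π(w))^{-1} f(π(ws))) otherwise, where π is the projection of the graph product onto the direct product and f is the coordinatewise map. Then Φ descends to a well-defined set map Φ_Γ : G_Γ → G'_Γ on the graph products, i.e., any two words representing the same element of G_Γ have images representing the same element of G'_Γ. -/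
open Monoid
open scoped commutatorElement

namespace GPaper

variable {ι : Type*}

/-- The relator subgroup of the graph product: normal closure of commutators of
elements of vertex groups at adjacent vertices. -/
def Rels (Γ : SimpleGraph ι) (G : ι → Type*) [∀ i, Group (G i)] : Subgroup (Monoid.CoprodI G) :=
  Subgroup.normalClosure
    { x | ∃ (i j : ι) (g : G i) (h : G j), Γ.Adj i j ∧
          x = ⁅Monoid.CoprodI.of g, Monoid.CoprodI.of h⁆ }

instance (Γ : SimpleGraph ι) (G : ι → Type*) [∀ i, Group (G i)] : (Rels Γ G).Normal :=
  Subgroup.normalClosure_normal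

/-- The graph product of the groups `G i` over the simplicial graph `Γ`. -/
abbrev GP (Γ : SimpleGraph ι) (G : ι → Type*) [∀ i, Group (G i)] :=
  Monoid.CoprodI G ⧸ Rels Γ G

/-- The canonical inclusion of a vertex group into the graph product. -/
def of (Γ : SimpleGraph ι) (G : ι → Type*) [∀ i, Group (G i)] (i : ι) : G i →* GP Γ G :=
  (QuotientGroup.mk' (Rels Γ G)).comp Monoid.CoprodI.of

/-- The canonical homomorphism from the graph product to the direct product. -/
def proj [DecidableEq ι] (Γ : SimpleGraph ι) (G : ι → Type*) [∀ i, Group (G i)] :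
    GP Γ G →* (∀ i, G i) :=
  QuotientGroup.lift (Rels Γ G) (Monoid.CoprodI.lift (fun i => MonoidHom.mulSingle G i)) (by
    intro x hx
    refine Subgroup.normalClosure_le_normal ?_ hx
    rintro y ⟨i, j, g, h, hadj, rfl⟩
    have hij : i ≠ j := hadj.ne
    simp only [SetLike.mem_coe, MonoidHom.mem_ker, map_commutatorElement,
      Monoid.CoprodI.lift_of]
    rw [commutatorElement_eq_one_iff_commute]
    exact Pi.mulSingle_commute hij g h)

/-- The canonical epimorphism `G_Γ → G_Γ'` when `Γ'` is obtained from `Γ` by adding edges. -/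
def mapGraph (Γ Γ' : SimpleGraph ι) (hΓ : Γ ≤ Γ') (G : ι → Type*) [∀ i, Group (G i)] :
    GP Γ G →* GP Γ' G :=
  QuotientGroup.lift (Rels Γ G) (QuotientGroup.mk' (Rels Γ' G)) (by
    intro x hx
    rw [QuotientGroup.ker_mk']
    refine Subgroup.normalClosure_le_normal ?_ hx
    rintro y ⟨i, j, g, h, hadj, rfl⟩
    exact Subgroup.subset_normalClosure ⟨i, j, g, h, hΓ hadj, rfl⟩)

/-- The element of the graph product represented by a word (list of syllables). -/
def wordProd (Γ : SimpleGraph ι) (G : ι → Type*) [∀ i, Group (G i)]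
    (w : List (Σ i, G i)) : GP Γ G :=
  (w.map fun s => of Γ G s.1 s.2).prod

/-- The image of a word in the direct product of the vertex groups. -/
def piProd [DecidableEq ι] (G : ι → Type*) [∀ i, Group (G i)]
    (w : List (Σ i, G i)) : ∀ i, G i :=
  (w.map fun s => Pi.mulSingle s.1 s.2).prod

/-- The ordered product of those syllables of a word that belong to `G i`. -/
def sylProd [DecidableEq ι] (G : ι → Type*) [∀ i, Group (G i)]
    (w : List (Σ i, G i)) (i : ι) : G i :=
  (w.filterMap fun s => if h : s.1 = i then some (cast (congrArg G h) s.2) else none).prod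

/-- The normal (syllable) length of an element of a graph product:
the minimal number of syllables in a word representing it. -/
noncomputable def nl (Γ : SimpleGraph ι) (G : ι → Type*) [∀ i, Group (G i)]
    (g : GP Γ G) : ℕ :=
  sInf { n | ∃ w : List (Σ i, G i), wordProd Γ G w = g ∧ w.length = n }

section Phi

open scoped Classical

variable [DecidableEq ι] {G G' : ι → Type*} [∀ i, Group (G i)] [∀ i, Group (G' i)]

/-- One step of the recursive construction of `Φ`: the new syllable
`f(π(w))⁻¹ · f(π(w)s)` (dropped if trivial), where `g = π(w)`. -/
noncomputable def phiStep (f : ∀ i, G i → G' i) (g : ∀ i, G i) (s : Σ i, G i) : List (Σ i, G' i) :=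
  if (f s.1 (g s.1))⁻¹ * f s.1 (g s.1 * s.2) = 1 then []
  else [⟨s.1, (f s.1 (g s.1))⁻¹ * f s.1 (g s.1 * s.2)⟩]

/-- Auxiliary recursion: process the word left to right, carrying the
image `g` of the prefix in the direct product. -/
noncomputable def phiAux (f : ∀ i, G i → G' i) : (∀ i, G i) → List (Σ i, G i) → List (Σ i, G' i)
  | _, [] => []
  | g, s :: w => phiStep f g s ++ phiAux f (g * Pi.mulSingle s.1 s.2) w

/-- The word map `Φ : S* → S'*` induced by the set maps `f i : G i → G' i`. -/
noncomputable def phiWord (f : ∀ i, G i → G' i) (w : List (Σ i, G i)) : List (Σ i, G' i) :=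
  phiAux f 1 w

end Phi

/-!
Reading a word from left to right, `Φ` only needs the running image `g = π(w)` in `∏ G_i` and
the element of `G'_Γ` produced so far. Accordingly, `a ∈ G_i` acts on the right on
`(∏ G_i) × G'_Γ` by `(g, x) ↦ (g · a, x · f_i(g_i)⁻¹ f_i(g_i a))`. The new factors telescope,
so this is an action of `G_i`. For adjacent `i ≠ j` the actions of `G_i` and `G_j` commute:
they change different coordinates of `g`, and the factors they append lie in commuting vertex
groups of `G'_Γ`. So the free product acts through `G_Γ`, and the action of a word on `(1, 1)`
gives `(π(w), Φ(w))`.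
-/

section GraphProduct

variable (Γ : SimpleGraph ι) {G : ι → Type*} [∀ i, Group (G i)]

theorem of_commute_of_adj {i j : ι} (hij : Γ.Adj i j) (a : G i) (b : G j) :
    Commute (of Γ G i a) (of Γ G j b) := by
  rw [← commutatorElement_eq_one_iff_commute]
  change QuotientGroup.mk' (Rels Γ G) ⁅CoprodI.of a, CoprodI.of b⁆ = 1
  rw [QuotientGroup.mk'_apply, QuotientGroup.eq_one_iff]
  exact Subgroup.subset_normalClosure ⟨i, j, a, b, hij, rfl⟩

theorem wordProd_cons (s : Σ i, G i) (w : List (Σ i, G i)) :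
    wordProd Γ G (s :: w) = of Γ G s.1 s.2 * wordProd Γ G w := by
  simp [wordProd]

theorem wordProd_append (v w : List (Σ i, G i)) :
    wordProd Γ G (v ++ w) = wordProd Γ G v * wordProd Γ G w := by
  simp [wordProd]

variable {M : Type*} [Monoid M] (φ : ∀ i, G i →* M)

theorem rels_le_ker_lift
    (hφ : ∀ i j, Γ.Adj i j → ∀ (a : G i) (b : G j), Commute (φ i a) (φ j b)) :
    Rels Γ G ≤ (CoprodI.lift φ).ker := by
  refine Subgroup.normalClosure_le_normal ?_
  rintro _ ⟨i, j, a, b, hij, rfl⟩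
  have hinv : ∀ k (c : G k), φ k c * φ k c⁻¹ = 1 := fun k c => by
    rw [← map_mul, mul_inv_cancel, map_one]
  simp only [SetLike.mem_coe, MonoidHom.mem_ker, commutatorElement_def, map_mul, ← map_inv,
    CoprodI.lift_of]
  rw [mul_assoc (φ i a), ← (hφ i j hij a⁻¹ b).eq, ← mul_assoc, hinv, one_mul, hinv]

def lift (hφ : ∀ i j, Γ.Adj i j → ∀ (a : G i) (b : G j), Commute (φ i a) (φ j b)) :
    GP Γ G →* M :=
  QuotientGroup.lift (Rels Γ G) (CoprodI.lift φ) (rels_le_ker_lift Γ φ hφ)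

theorem lift_of (hφ : ∀ i j, Γ.Adj i j → ∀ (a : G i) (b : G j), Commute (φ i a) (φ j b))
    (i : ι) (a : G i) : lift Γ φ hφ (of Γ G i a) = φ i a := by
  rw [lift, of, MonoidHom.comp_apply, QuotientGroup.mk'_apply, QuotientGroup.lift_mk,
    CoprodI.lift_of]

end GraphProduct

section Phi

variable (Γ : SimpleGraph ι) {G G' : ι → Type*} [∀ i, Group (G i)] [∀ i, Group (G' i)]
  (f : ∀ i, G i → G' i)

/-- The syllable `f_i(g_i)⁻¹ f_i(g_i a)` that `Φ` appends when `a ∈ G_i` follows a prefix with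
image `g` in `∏ G_i`. -/
def twistFactor (g : ∀ i, G i) (i : ι) (a : G i) : G' i :=
  (f i (g i))⁻¹ * f i (g i * a)

theorem wordProd_phiStep (g : ∀ i, G i) (s : Σ i, G i) :
    wordProd Γ G' (phiStep f g s) = of Γ G' s.1 (twistFactor f g s.1 s.2) := by
  unfold phiStep
  split_ifs with h
  · simp [wordProd, twistFactor, h]
  · simp [wordProd, twistFactor]

variable [DecidableEq ι]

def twistStep (i : ι) (a : G i) (p : (∀ i, G i) × GP Γ G') : (∀ i, G i) × GP Γ G' :=
  (p.1 * Pi.mulSingle i a, p.2 * of Γ G' i (twistFactor f p.1 i a))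

theorem twistStep_one (i : ι) (p : (∀ i, G i) × GP Γ G') : twistStep Γ f i 1 p = p := by
  simp [twistStep, twistFactor]

theorem twistStep_mul (i : ι) (a b : G i) (p : (∀ i, G i) × GP Γ G') :
    twistStep Γ f i (a * b) p = twistStep Γ f i b (twistStep Γ f i a p) := by
  have telescope : twistFactor f p.1 i (a * b)
      = twistFactor f p.1 i a * twistFactor f (p.1 * Pi.mulSingle i a) i b := by
    simp only [twistFactor, Pi.mul_apply, Pi.mulSingle_eq_same, mul_assoc, mul_inv_cancel_left]
  simp only [twistStep, Pi.mulSingle_mul, telescope, map_mul, mul_assoc]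

theorem twistStep_comm {i j : ι} (hij : Γ.Adj i j) (a : G i) (b : G j)
    (p : (∀ i, G i) × GP Γ G') :
    twistStep Γ f j b (twistStep Γ f i a p) = twistStep Γ f i a (twistStep Γ f j b p) := by
  have hfac : ∀ {k l : ι}, k ≠ l → ∀ (c : G k) (d : G l),
      twistFactor f (p.1 * Pi.mulSingle k c) l d = twistFactor f p.1 l d := fun hkl c d => by
    simp [twistFactor, Pi.mulSingle_eq_of_ne hkl.symm]
  simp only [twistStep, hfac hij.ne, hfac hij.ne.symm, mul_assoc,
    (Pi.mulSingle_commute hij.ne a b).eq, (of_commute_of_adj Γ hij _ _).eq]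

def twistHom (i : ι) : G i →* (Function.End ((∀ i, G i) × GP Γ G'))ᵐᵒᵖ where
  toFun a := .op (twistStep Γ f i a)
  map_one' := MulOpposite.unop_injective <| funext (twistStep_one Γ f i)
  map_mul' a b := MulOpposite.unop_injective <| funext (twistStep_mul Γ f i a b)

theorem twistHom_commute {i j : ι} (hij : Γ.Adj i j) (a : G i) (b : G j) :
    Commute (twistHom Γ f i a) (twistHom Γ f j b) :=
  MulOpposite.unop_injective <| funext (twistStep_comm Γ f hij a b)

def twistAction : GP Γ G →* (Function.End ((∀ i, G i) × GP Γ G'))ᵐᵒᵖ :=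
  lift Γ (twistHom Γ f) fun _ _ hij => twistHom_commute Γ f hij

theorem twistAction_of (i : ι) (a : G i) :
    (twistAction Γ f (of Γ G i a)).unop = twistStep Γ f i a := by
  rw [twistAction, lift_of]
  rfl

theorem twistAction_wordProd (w : List (Σ i, G i)) (p : (∀ i, G i) × GP Γ G') :
    (twistAction Γ f (wordProd Γ G w)).unop p
      = (p.1 * piProd G w, p.2 * wordProd Γ G' (phiAux f p.1 w)) := by
  induction w generalizing p with
  | nil => simp [wordProd, piProd, phiAux]; rfl
  | cons s w ih =>
    rw [wordProd_cons, map_mul]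
    change (twistAction Γ f _).unop ((twistAction Γ f (of Γ G s.1 s.2)).unop p) = _
    rw [twistAction_of, ih]
    simp [twistStep, piProd, phiAux, wordProd_append, wordProd_phiStep, mul_assoc]

end Phi

theorem stmt2_general {ι : Type*} [DecidableEq ι] (Γ : SimpleGraph ι)
    (G G' : ι → Type*) [∀ i, Group (G i)] [∀ i, Group (G' i)]
    (f : ∀ i, G i → G' i) (w₁ w₂ : List (Σ i, G i))
    (h : wordProd Γ G w₁ = wordProd Γ G w₂) :
    wordProd Γ G' (phiWord f w₁) = wordProd Γ G' (phiWord f w₂) := by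
  have hact := congrArg (fun x => ((twistAction Γ f x).unop (1, 1)).2) h
  simpa [twistAction_wordProd, phiWord] using hact

/-- The recursively defined word map `Φ` descends to a well-defined
set map `G_Γ → G'_Γ`: words representing the same element of the graph product have
images representing the same element. -/
theorem stmt2 {ι : Type*} [DecidableEq ι] [Fintype ι] (Γ : SimpleGraph ι)
    (G G' : ι → Type*) [∀ i, Group (G i)] [∀ i, Group (G' i)]
    (f : ∀ i, G i → G' i) (w₁ w₂ : List (Σ i, G i))
    (h : wordProd Γ G w₁ = wordProd Γ G w₂) :
    wordProd Γ G' (phiWord f w₁) = wordProd Γ G' (phiWord f w₂) :=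
  stmt2_general Γ G G' f w₁ w₂ h

end GPaper
end

section
/- Let Γ be a finite simplicial graph, Γ̄ obtained from Γ by adding edges, and let f_i : G_i → G'_i be set maps. Then the induced homomorphism Φ_Γ : K_Γ → K'_Γ maps K_{Γ,Γ̄} = ker(G_Γ → G_{Γ̄}) into K'_{Γ,Γ̄} = ker(G'_Γ → G'_{Γ̄}). -/
open Monoid
open scoped commutatorElement

namespace GPaper

variable {ι : Type*}

/-!
`Φ` is the left component of a homomorphism `Θ` from `G_Δ` into the semidirect product
`((∏ G_i) → G'_Δ) ⋊ ∏ G_i`, with `∏ G_i` acting on functions by right translation, which sends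
`g ∈ G_i` to `(x ↦ f_i(x_i)⁻¹ f_i(x_i g), g)`. The relators of `G_Δ` die under `Θ`: for adjacent
`i ≠ j` a syllable at `i` does not change the coordinate `x_j` seen by a later syllable at `j`,
and the resulting elements of `G'_i` and `G'_j` commute in `G'_Δ`. Evaluating the left component
of `Θ w` at `1` gives `Φ w`, so a word trivial in `G_Δ` has `Φ`-image trivial in `G'_Δ`;
take `Δ = Γ̄`.
-/

section Theta

variable {G G' : ι → Type*} [∀ i, Group (G i)] [∀ i, Group (G' i)]

lemma of_commute_of_adj_s6 (Δ : SimpleGraph ι) {i j : ι} (h : Δ.Adj i j) (g : G i) (k : G j) :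
    Commute (of Δ G i g) (of Δ G j k) := by
  rw [← commutatorElement_eq_one_iff_commute]
  show QuotientGroup.mk' (Rels Δ G) ⁅Monoid.CoprodI.of g, Monoid.CoprodI.of k⁆ = 1
  rw [← MonoidHom.mem_ker, QuotientGroup.ker_mk']
  exact Subgroup.subset_normalClosure ⟨i, j, g, k, h, rfl⟩

lemma wordProd_eq_mk (Δ : SimpleGraph ι) (w : List (Σ i, G i)) :
    wordProd Δ G w = QuotientGroup.mk' (Rels Δ G) (w.map fun s => Monoid.CoprodI.of s.2).prod := by
  rw [wordProd, map_list_prod, List.map_map]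
  rfl

lemma mapGraph_wordProd (Γ Γ' : SimpleGraph ι) (hΓ : Γ ≤ Γ') (w : List (Σ i, G i)) :
    mapGraph Γ Γ' hΓ G (wordProd Γ G w) = wordProd Γ' G w := by
  rw [wordProd_eq_mk, wordProd_eq_mk]
  rfl

variable (G) in
def rightTranslation (X : Type*) [Group X] : (∀ i, G i) →* MulAut ((∀ i, G i) → X) where
  toFun a :=
    { toFun := fun F x => F (x * a)
      invFun := fun F x => F (x * a⁻¹)
      left_inv := fun F => by funext x; simp
      right_inv := fun F => by funext x; simp
      map_mul' := fun _ _ => rfl }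
  map_one' := by ext F x; simp [MulAut.one_apply]
  map_mul' a b := by ext F x; simp [MulAut.mul_apply, mul_assoc]

variable (G) in
abbrev ThetaTarget (Δ : SimpleGraph ι) (G' : ι → Type*) [∀ i, Group (G' i)] :=
  ((∀ i, G i) → GP Δ G') ⋊[rightTranslation G (GP Δ G')] (∀ i, G i)

variable [DecidableEq ι]

def thetaVertex (Δ : SimpleGraph ι) (f : ∀ i, G i → G' i) (i : ι) :
    G i →* ThetaTarget G Δ G' where
  toFun g := ⟨fun x => of Δ G' i ((f i (x i))⁻¹ * f i (x i * g)), Pi.mulSingle i g⟩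
  map_one' := by
    refine SemidirectProduct.ext ?_ ?_
    · funext x; simp
    · simp
  map_mul' g h := by
    refine SemidirectProduct.ext ?_ ?_
    · funext x
      show of Δ G' i ((f i (x i))⁻¹ * f i (x i * (g * h))) =
        of Δ G' i ((f i (x i))⁻¹ * f i (x i * g)) *
          of Δ G' i ((f i ((x * Pi.mulSingle i g) i))⁻¹ * f i ((x * Pi.mulSingle i g) i * h))
      rw [← map_mul]
      congr 1
      simp [mul_assoc]
    · simp [SemidirectProduct.mul_right, Pi.mulSingle_mul]

lemma thetaVertex_commute_of_adj (Δ : SimpleGraph ι) (f : ∀ i, G i → G' i) {i j : ι}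
    (hadj : Δ.Adj i j) (g : G i) (h : G j) :
    Commute (thetaVertex Δ f i g) (thetaVertex Δ f j h) := by
  have hij : i ≠ j := hadj.ne
  refine SemidirectProduct.ext ?_ ?_
  · funext x
    show of Δ G' i ((f i (x i))⁻¹ * f i (x i * g)) *
        of Δ G' j ((f j ((x * Pi.mulSingle i g) j))⁻¹ * f j ((x * Pi.mulSingle i g) j * h)) =
      of Δ G' j ((f j (x j))⁻¹ * f j (x j * h)) *
        of Δ G' i ((f i ((x * Pi.mulSingle j h) i))⁻¹ * f i ((x * Pi.mulSingle j h) i * g))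
    rw [show (x * Pi.mulSingle i g) j = x j by simp [Pi.mulSingle_eq_of_ne' hij],
      show (x * Pi.mulSingle j h) i = x i by simp [Pi.mulSingle_eq_of_ne' hij.symm]]
    exact of_commute_of_adj_s6 Δ hadj _ _
  · exact (Pi.mulSingle_commute hij g h).eq

def theta (Δ : SimpleGraph ι) (f : ∀ i, G i → G' i) : GP Δ G →* ThetaTarget G Δ G' :=
  QuotientGroup.lift (Rels Δ G) (Monoid.CoprodI.lift (thetaVertex Δ f)) (by
    refine Subgroup.normalClosure_le_normal ?_
    rintro y ⟨i, j, g, h, hadj, rfl⟩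
    rw [SetLike.mem_coe, MonoidHom.mem_ker, map_commutatorElement, Monoid.CoprodI.lift_of,
      Monoid.CoprodI.lift_of, commutatorElement_eq_one_iff_commute]
    exact thetaVertex_commute_of_adj Δ f hadj g h)

lemma theta_wordProd_left (Δ : SimpleGraph ι) (f : ∀ i, G i → G' i) (w : List (Σ i, G i))
    (x : ∀ i, G i) :
    (theta Δ f (wordProd Δ G w)).left x = wordProd Δ G' (phiAux f x w) := by
  induction w generalizing x with
  | nil => simp [phiAux, wordProd]
  | cons s w ih =>
    rw [wordProd, List.map_cons, List.prod_cons, map_mul, SemidirectProduct.mul_left]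
    show of Δ G' s.1 ((f s.1 (x s.1))⁻¹ * f s.1 (x s.1 * s.2)) *
        (theta Δ f (wordProd Δ G w)).left (x * Pi.mulSingle s.1 s.2) = _
    rw [ih, phiAux, wordProd, wordProd, List.map_append, List.prod_append, phiStep]
    split_ifs with h
    · simp [h]
    · simp

theorem wordProd_phiWord_eq_one (Δ : SimpleGraph ι) (f : ∀ i, G i → G' i)
    {w : List (Σ i, G i)} (hw : wordProd Δ G w = 1) :
    wordProd Δ G' (phiWord f w) = 1 := by
  rw [phiWord, ← theta_wordProd_left Δ f w 1, hw, map_one]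
  rfl

end Theta

theorem stmt6_general {ι : Type*} [DecidableEq ι] (Γ Γ' : SimpleGraph ι)
    (hΓ : Γ ≤ Γ') (G G' : ι → Type*) [∀ i, Group (G i)] [∀ i, Group (G' i)]
    (f : ∀ i, G i → G' i) (w : List (Σ i, G i))
    (hker : mapGraph Γ Γ' hΓ G (wordProd Γ G w) = 1) :
    mapGraph Γ Γ' hΓ G' (wordProd Γ G' (phiWord f w)) = 1 := by
  rw [mapGraph_wordProd] at hker ⊢
  exact wordProd_phiWord_eq_one Γ' f hker

/-- The induced map `Φ_Γ` sends `K_{Γ,Γ̄} = ker(G_Γ → G_{Γ̄})` into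
`K'_{Γ,Γ̄} = ker(G'_Γ → G'_{Γ̄})` (stated on representing words in the kernel `K_Γ`). -/
theorem stmt6 {ι : Type*} [DecidableEq ι] [Fintype ι] (Γ Γ' : SimpleGraph ι)
    (hΓ : Γ ≤ Γ') (G G' : ι → Type*) [∀ i, Group (G i)] [∀ i, Group (G' i)]
    (f : ∀ i, G i → G' i) (w : List (Σ i, G i))
    (hw : wordProd Γ G w ∈ (proj Γ G).ker)
    (hker : mapGraph Γ Γ' hΓ G (wordProd Γ G w) = 1) :
    mapGraph Γ Γ' hΓ G' (wordProd Γ G' (phiWord f w)) = 1 :=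
  stmt6_general Γ Γ' hΓ G G' f w hker

end GPaper
end

section
/- Let C be a class of groups such that (P1) every subgroup of any finitely generated right-angled Artin group belongs to C, and (P2) C is closed under extensions. Let Γ be a finite simplicial graph and G_Γ the graph product of countable groups {G_i}. If each G_i ∈ C, then G_Γ ∈ C. -/
open Monoid
open scoped commutatorElement

namespace GPaper

variable {ι : Type*}

/-!
The projection `proj : G_Γ → ∏ G i` is onto and `∏ G i` lies in `C` by closure under
extensions, so it suffices to embed `ker proj` into the right-angled Artin group on `Γ`.
Fix injections `f i : G i → ℤ`. Read an element of `G_Γ` syllable by syllable, keeping track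
of the image `p` of the prefix read so far in `∏ G i`, and replace a syllable `g ∈ G i` by
`f i (p i)⁻¹ * f i (p i * g)` at vertex `i`. This respects the defining relations of `G_Γ`,
because syllables at adjacent vertices read and change different coordinates of `p`, and it
yields a cocycle `Ψ_p (a * b) = Ψ_p a * Ψ_{p * proj a} b`. On `ker proj` the cocycle `Ψ_1` is
therefore a homomorphism, and it is injective because the same construction for left
inverses of the `f i` undoes it.
-/

def IsomorphismClosed (C : (H : Type) → [Group H] → Prop) : Prop :=
  ∀ (H K : Type) [Group H] [Group K], (H ≃* K) → C H → C K

def ExtensionClosed (C : (H : Type) → [Group H] → Prop) : Prop :=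
  ∀ (B : Type) [Group B] (A : Subgroup B) [A.Normal], C A → C (B ⧸ A) → C B

section ClassOfGroups

variable {C : (H : Type) → [Group H] → Prop}

theorem ExtensionClosed.of_surjective (hiso : IsomorphismClosed C) (hext : ExtensionClosed C)
    {B Q : Type} [Group B] [Group Q] (φ : B →* Q) (hφ : Function.Surjective φ)
    (hker : C φ.ker) (hQ : C Q) : C B :=
  hext B φ.ker hker (hiso _ _ (QuotientGroup.quotientKerEquivOfSurjective φ hφ).symm hQ)

theorem ExtensionClosed.prod (hiso : IsomorphismClosed C) (hext : ExtensionClosed C)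
    {A B : Type} [Group A] [Group B] (hA : C A) (hB : C B) : C (A × B) := by
  refine hext.of_surjective hiso (MonoidHom.snd A B) Prod.snd_surjective ?_ hB
  have hrange : (MonoidHom.inl A B).range = (MonoidHom.snd A B).ker := by
    ext ⟨a, b⟩
    simp [eq_comm, Subgroup.mem_prod]
  have hinl : Function.Injective (MonoidHom.inl A B) := fun _ _ h => congrArg Prod.fst h
  exact hiso _ _ ((MonoidHom.ofInjective hinl).trans (MulEquiv.subgroupCongr hrange)) hA

theorem ExtensionClosed.pi (hiso : IsomorphismClosed C) (hext : ExtensionClosed C)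
    (htriv : C PUnit) {α : Type} [Finite α] (H : α → Type) [∀ a, Group (H a)]
    (hH : ∀ a, C (H a)) : C (∀ a, H a) := by
  refine Finite.induction_empty_option
    (P := fun α => ∀ (H : α → Type) [∀ a, Group (H a)], (∀ a, C (H a)) → C (∀ a, H a))
    ?_ ?_ ?_ α H hH
  · intro α β e hα H _ hH
    let e' : (∀ b, H b) ≃* ∀ a, H (e a) :=
      { Equiv.piCongrLeft' H e.symm with map_mul' := fun _ _ => rfl }
    exact hiso _ _ e'.symm (hα (fun a => H (e a)) fun a => hH (e a))
  · intro H _ _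
    exact hiso _ _ MulEquiv.ofUnique htriv
  · intro α _ hα H _ hH
    let e : (∀ a, H a) ≃* H none × ∀ a, H (some a) :=
      { Equiv.piOptionEquivProd with map_mul' := fun _ _ => rfl }
    have hsome : C (∀ a, H (some a)) := hα (fun a => H (some a)) fun a => hH (some a)
    exact hiso _ _ e.symm (hext.prod hiso (hH none) hsome)

end ClassOfGroups

namespace GP

variable {Γ : SimpleGraph ι} {G : ι → Type*} [∀ i, Group (G i)]

@[elab_as_elim]
theorem induction_on {P : GP Γ G → Prop} (x : GP Γ G) (h1 : P 1)
    (hof : ∀ i (g : G i), P (of Γ G i g)) (hmul : ∀ x y, P x → P y → P (x * y)) : P x := by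
  induction x using QuotientGroup.induction_on with | H z => ?_
  induction z using CoprodI.induction_on with
  | one => exact h1
  | of i g => exact hof i g
  | mul x y hx hy => exact hmul _ _ hx hy

theorem of_commute {i j : ι} (h : Γ.Adj i j) (a : G i) (b : G j) :
    Commute (of Γ G i a) (of Γ G j b) := by
  rw [← commutatorElement_eq_one_iff_commute]
  simp only [of, MonoidHom.comp_apply, ← map_commutatorElement]
  exact (QuotientGroup.eq_one_iff _).mpr (Subgroup.subset_normalClosure ⟨i, j, a, b, h, rfl⟩)

theorem hom_ext {H : Type*} [Monoid H] {φ ψ : GP Γ G →* H}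
    (h : ∀ i, φ.comp (of Γ G i) = ψ.comp (of Γ G i)) : φ = ψ :=
  QuotientGroup.monoidHom_ext _ (CoprodI.ext_hom _ _ h)

section Lift

variable {H : Type*} [Group H] (φ : ∀ i, G i →* H)
  (hφ : ∀ i j, Γ.Adj i j → ∀ a b, Commute (φ i a) (φ j b))

def lift : GP Γ G →* H :=
  QuotientGroup.lift _ (CoprodI.lift φ) <| Subgroup.normalClosure_le_normal <| by
    rintro _ ⟨i, j, a, b, hij, rfl⟩
    rw [SetLike.mem_coe, MonoidHom.mem_ker, map_commutatorElement, CoprodI.lift_of,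
      CoprodI.lift_of, commutatorElement_eq_one_iff_commute]
    exact hφ i j hij a b

@[simp]
theorem lift_of (i : ι) (g : G i) : lift φ hφ (of Γ G i g) = φ i g :=
  CoprodI.lift_of φ g

end Lift

def congr {κ : Type*} {Δ : SimpleGraph κ} (A : Type*) [Group A] (e : Γ ≃g Δ) :
    GP Γ (fun _ => A) ≃* GP Δ (fun _ => A) :=
  MonoidHom.toMulEquiv
    (lift (fun i => of Δ (fun _ => A) (e i)) fun _ _ h a b =>
      of_commute (G := fun _ => A) (e.map_adj_iff.mpr h) a b)
    (lift (fun i => of Γ (fun _ => A) (e.symm i)) fun _ _ h a b =>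
      of_commute (G := fun _ => A) (e.symm.map_adj_iff.mpr h) a b)
    (hom_ext fun _ => by ext; simp)
    (hom_ext fun _ => by ext; simp)

end GP

theorem proj_of [DecidableEq ι] (Γ : SimpleGraph ι) {G : ι → Type*} [∀ i, Group (G i)]
    (i : ι) (g : G i) : proj Γ G (of Γ G i g) = Pi.mulSingle i g := by
  simp [proj, of]

theorem proj_surjective [DecidableEq ι] [Fintype ι] (Γ : SimpleGraph ι) (G : ι → Type*)
    [∀ i, Group (G i)] : Function.Surjective (proj Γ G) := by
  intro p
  rw [← Finset.noncommProd_mulSingle p]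
  exact Submonoid.noncommProd_mem (MonoidHom.mrange (proj Γ G)) _ _ _
    fun i _ => ⟨_, proj_of Γ i (p i)⟩

section Cocycle

variable [DecidableEq ι] (Γ : SimpleGraph ι) {G G' : ι → Type*} [∀ i, Group (G i)]
  [∀ i, Group (G' i)] (f : ∀ i, G i → G' i)

def cocycleStep (i : ι) (g : G i) (x : (∀ j, G j) × GP Γ G') : (∀ j, G j) × GP Γ G' :=
  (x.1 * Pi.mulSingle i g, x.2 * of Γ G' i ((f i (x.1 i))⁻¹ * f i (x.1 i * g)))

theorem cocycleStep_one (i : ι) (x : (∀ j, G j) × GP Γ G') : cocycleStep Γ f i 1 x = x := by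
  simp [cocycleStep]

theorem cocycleStep_cocycleStep (i : ι) (g h : G i) (x : (∀ j, G j) × GP Γ G') :
    cocycleStep Γ f i h (cocycleStep Γ f i g x) = cocycleStep Γ f i (g * h) x := by
  refine Prod.ext ?_ ?_
  · simp [cocycleStep, mul_assoc, ← Pi.mulSingle_mul]
  · simp only [cocycleStep, Pi.mul_apply, Pi.mulSingle_eq_same, mul_assoc, ← map_mul]
    congr 2
    group

theorem cocycleStep_comm {i j : ι} (hij : Γ.Adj i j) (g : G i) (h : G j)
    (x : (∀ j, G j) × GP Γ G') :
    cocycleStep Γ f j h (cocycleStep Γ f i g x) =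
      cocycleStep Γ f i g (cocycleStep Γ f j h x) := by
  refine Prod.ext ?_ ?_
  · simp only [cocycleStep, mul_assoc, (Pi.mulSingle_commute hij.ne g h).eq]
  · simp only [cocycleStep, Pi.mul_apply, Pi.mulSingle_eq_of_ne hij.ne,
      Pi.mulSingle_eq_of_ne hij.ne', mul_one, mul_assoc, (GP.of_commute hij _ _).eq]

def cocycleStepPerm (i : ι) (g : G i) : Equiv.Perm ((∀ j, G j) × GP Γ G') where
  toFun := cocycleStep Γ f i g
  invFun := cocycleStep Γ f i g⁻¹
  left_inv x := by rw [cocycleStep_cocycleStep, mul_inv_cancel, cocycleStep_one]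
  right_inv x := by rw [cocycleStep_cocycleStep, inv_mul_cancel, cocycleStep_one]

/-- A right action, hence the `ᵐᵒᵖ`: an element acts by its syllables in reading order. -/
def cocycleAction : GP Γ G →* (Equiv.Perm ((∀ j, G j) × GP Γ G'))ᵐᵒᵖ :=
  GP.lift
    (fun i => MonoidHom.mk' (fun g => .op (cocycleStepPerm Γ f i g)) fun g h =>
      congrArg MulOpposite.op (Equiv.ext fun x => (cocycleStep_cocycleStep Γ f i g h x).symm))
    fun _ _ hij g h => by
      simp only [Commute, SemiconjBy, MonoidHom.mk'_apply, ← MulOpposite.op_mul]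
      exact congrArg _ (Equiv.ext fun x => cocycleStep_comm Γ f hij g h x)

def cocycle (p : ∀ i, G i) (k : GP Γ G) : GP Γ G' := ((cocycleAction Γ f k).unop (p, 1)).2

theorem cocycleAction_of (i : ι) (g : G i) (x : (∀ j, G j) × GP Γ G') :
    (cocycleAction Γ f (of Γ G i g)).unop x = cocycleStep Γ f i g x := by
  simp [cocycleAction, cocycleStepPerm]

theorem cocycle_of (p : ∀ i, G i) (i : ι) (g : G i) :
    cocycle Γ f p (of Γ G i g) = of Γ G' i ((f i (p i))⁻¹ * f i (p i * g)) := by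
  simp [cocycle, cocycleAction_of, cocycleStep]

theorem cocycleAction_apply (k : GP Γ G) (p : ∀ i, G i) (y : GP Γ G') :
    (cocycleAction Γ f k).unop (p, y) = (p * proj Γ G k, y * cocycle Γ f p k) := by
  induction k using GP.induction_on generalizing p y with
  | h1 => simp [cocycle]
  | hof i g => simp [cocycleAction_of, cocycle_of, cocycleStep, proj_of]
  | hmul a b ha hb =>
    have hab : cocycle Γ f p (a * b) = cocycle Γ f p a * cocycle Γ f (p * proj Γ G a) b := by
      rw [cocycle, map_mul, MulOpposite.unop_mul, Equiv.Perm.mul_apply, ha, hb, one_mul]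
    rw [map_mul, MulOpposite.unop_mul, Equiv.Perm.mul_apply, ha, hb, hab, map_mul, mul_assoc,
      mul_assoc]

theorem cocycle_one (p : ∀ i, G i) : cocycle Γ f p 1 = 1 := by
  simp [cocycle]

theorem cocycle_mul (p : ∀ i, G i) (a b : GP Γ G) :
    cocycle Γ f p (a * b) = cocycle Γ f p a * cocycle Γ f (p * proj Γ G a) b := by
  rw [cocycle, map_mul, MulOpposite.unop_mul, Equiv.Perm.mul_apply, cocycleAction_apply,
    cocycleAction_apply, one_mul]

theorem proj_cocycle (k : GP Γ G) (p : ∀ i, G i) :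
    (fun i => f i (p i)) * proj Γ G' (cocycle Γ f p k) = fun i => f i ((p * proj Γ G k) i) := by
  induction k using GP.induction_on generalizing p with
  | h1 => simp [cocycle_one]
  | hof i g =>
    funext j
    by_cases hj : j = i
    · subst hj
      simp [cocycle_of, proj_of]
    · simp [cocycle_of, proj_of, Pi.mulSingle_eq_of_ne hj]
  | hmul a b ha hb => rw [cocycle_mul, map_mul, ← mul_assoc, ha, hb, map_mul, mul_assoc]

theorem cocycle_cocycle {r : ∀ i, G' i → G i} (hr : ∀ i, Function.LeftInverse (r i) (f i))
    (k : GP Γ G) (p : ∀ i, G i) : cocycle Γ r (fun i => f i (p i)) (cocycle Γ f p k) = k := by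
  induction k using GP.induction_on generalizing p with
  | h1 => rw [cocycle_one, cocycle_one]
  | hof i g => rw [cocycle_of, cocycle_of, hr i, mul_inv_cancel_left, hr i, inv_mul_cancel_left]
  | hmul a b ha hb => rw [cocycle_mul, cocycle_mul, proj_cocycle, ha, hb]

theorem cocycle_injective (hf : ∀ i, Function.Injective (f i)) (p : ∀ i, G i) :
    Function.Injective (cocycle Γ f p) :=
  Function.LeftInverse.injective (cocycle_cocycle Γ f (r := fun i => Function.invFun (f i))
    (fun i => Function.leftInverse_invFun (hf i)) · p)

def cocycleKerHom : (proj Γ G).ker →* GP Γ G' :=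
  MonoidHom.mk' (fun k => cocycle Γ f 1 k) fun a b => by
    rw [Subgroup.coe_mul, cocycle_mul, a.2, mul_one]

theorem cocycleKerHom_injective (hf : ∀ i, Function.Injective (f i)) :
    Function.Injective (cocycleKerHom Γ f) :=
  fun _ _ h => Subtype.ext (cocycle_injective Γ f hf 1 h)

end Cocycle

theorem exists_injective_ker_proj [DecidableEq ι] (Γ : SimpleGraph ι) (G : ι → Type*)
    [∀ i, Group (G i)] [∀ i, Countable (G i)] :
    ∃ φ : (proj Γ G).ker →* GP Γ (fun _ => Multiplicative ℤ), Function.Injective φ := by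
  have hcount (i : ι) : ∃ f : G i → Multiplicative ℤ, Function.Injective f := by
    obtain ⟨f, hf⟩ := Countable.exists_injective_nat (G i)
    exact ⟨fun g => .ofAdd (f g : ℤ), fun a b h => hf (by simpa using h)⟩
  choose f hf using hcount
  exact ⟨cocycleKerHom Γ f, cocycleKerHom_injective Γ f hf⟩
theorem stmt14_general (C : (H : Type) → [inst : Group H] → Prop)
    (hiso : ∀ (H K : Type) [Group H] [Group K], (H ≃* K) → C H → C K)
    (hP1 : ∀ (n : ℕ) (Γ' : SimpleGraph (Fin n))
      (H : Subgroup (GP Γ' (fun _ : Fin n => Multiplicative ℤ))), C H)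
    (hP2 : ∀ (B : Type) [Group B] (A : Subgroup B) [A.Normal], C A → C (B ⧸ A) → C B)
    {ι : Type} [Fintype ι] (Γ : SimpleGraph ι)
    (G : ι → Type) [∀ i, Group (G i)] [∀ i, Countable (G i)]
    (hG : ∀ i, C (G i)) :
    C (GP Γ G) := by
  classical
  have htriv : C PUnit := hiso _ _ MulEquiv.ofUnique (hP1 0 ⊥ ⊥)
  obtain ⟨φ, hφ⟩ := exists_injective_ker_proj Γ G
  let e := GP.congr (Multiplicative ℤ) (SimpleGraph.Iso.map (Fintype.equivFin ι) Γ)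
  have hψ : Function.Injective (e.toMonoidHom.comp φ) := e.injective.comp hφ
  have hker : C (proj Γ G).ker := hiso _ _ (MonoidHom.ofInjective hψ).symm (hP1 _ _ _)
  have hpi : C (∀ i, G i) := ExtensionClosed.pi hiso hP2 htriv G hG
  exact ExtensionClosed.of_surjective hiso hP2 (proj Γ G) (proj_surjective Γ G) hker hpi

/-- Let `C` be an isomorphism-invariant class of groups containing all
subgroups of finitely generated right-angled Artin groups (P1) and closed under
extensions (P2). If all (countable) vertex groups lie in `C`, then so does the graph
product. -/
theorem stmt14 (C : (H : Type) → [inst : Group H] → Prop)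
    (hiso : ∀ (H K : Type) [Group H] [Group K], (H ≃* K) → C H → C K)
    (hP1 : ∀ (n : ℕ) (Γ' : SimpleGraph (Fin n))
      (H : Subgroup (GP Γ' (fun _ : Fin n => Multiplicative ℤ))), C H)
    (hP2 : ∀ (B : Type) [Group B] (A : Subgroup B) [A.Normal], C A → C (B ⧸ A) → C B)
    {ι : Type} [DecidableEq ι] [Fintype ι] (Γ : SimpleGraph ι)
    (G : ι → Type) [∀ i, Group (G i)] [∀ i, Countable (G i)]
    (hG : ∀ i, C (G i)) :
    C (GP Γ G) :=
  stmt14_general C hiso hP1 hP2 Γ G hG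

end GPaper
end
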